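/- The quartic form G(x₁,…,x₁₀) = (x₁²+⋯+x₁₀²)² − 4[(x₅x₁₀−x₆x₉+x₇x₈)² + (−x₂x₁₀+x₃x₉−x₄x₈)² + (x₁x₁₀−x₃x₇+x₄x₆)² + (−x₁x₉+x₂x₇−x₄x₅)² + (x₁x₈−x₂x₆+x₃x₅)²] on ℝ¹⁰ is nonnegative but is not a sum of squares of real polynomials. -/

import Mathlib

open MvPolynomial

/-- The quartic form `G = (|x|⁴ + F(x))/2` on `ℝ¹⁰` (for the isoparametric polynomial `F`
of degree 4 with multiplicities `(2,2)`), as a polynomial in 10 variables. -/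
noncomputable def GP : MvPolynomial (Fin 10) ℝ :=
  (∑ i, X i ^ 2) ^ 2
    - 4 * ((X 4 * X 9 - X 5 * X 8 + X 6 * X 7) ^ 2
        + (-(X 1 * X 9) + X 2 * X 8 - X 3 * X 7) ^ 2
        + (X 0 * X 9 - X 2 * X 6 + X 3 * X 5) ^ 2
        + (-(X 0 * X 8) + X 1 * X 6 - X 3 * X 4) ^ 2
        + (X 0 * X 7 - X 1 * X 5 + X 2 * X 4) ^ 2)

set_option maxHeartbeats 2000000

private lemma sum10 {M : Type*} [AddCommMonoid M] (f : Fin 10 → M) :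
    ∑ i, f i = f 0 + f 1 + f 2 + f 3 + f 4 + f 5 + f 6 + f 7 + f 8 + f 9 := by
  simp [Fin.sum_univ_succ, Fin.succ, add_assoc]

/-- restriction of a 10-variable polynomial to the line `x i = t, x k = c*t`. -/
noncomputable def lmap (i k : Fin 10) (c : ℝ) : MvPolynomial (Fin 10) ℝ →ₐ[ℝ] Polynomial ℝ :=
  MvPolynomial.aeval fun v => if v = i then (Polynomial.X : Polynomial ℝ)
    else if v = k then Polynomial.C c * Polynomial.X else 0

private lemma line_coeff (i k : Fin 10) (hik : i ≠ k) (c : ℝ) (p : MvPolynomial (Fin 10) ℝ) :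
    (lmap i k c p).coeff 0 = MvPolynomial.coeff 0 p ∧
    (lmap i k c p).coeff 1
        = MvPolynomial.coeff (Finsupp.single i 1) p
          + c * MvPolynomial.coeff (Finsupp.single k 1) p ∧
    (lmap i k c p).coeff 2
        = MvPolynomial.coeff (Finsupp.single i 2) p
          + c * MvPolynomial.coeff (Finsupp.single i 1 + Finsupp.single k 1) p
          + c ^ 2 * MvPolynomial.coeff (Finsupp.single k 2) p := by
  have hki : k ≠ i := Ne.symm hik
  induction p using MvPolynomial.induction_on with
  | C a =>
      have h5 : ((0 : Fin 10 →₀ ℕ) = Finsupp.single i 1 + Finsupp.single k 1) ↔ False := by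
        constructor
        · intro hh
          have := DFunLike.congr_fun hh i
          simp [Finsupp.single_apply, hik, hki] at this
        · exact False.elim
      simp [lmap, MvPolynomial.aeval_C, MvPolynomial.coeff_C, h5, Polynomial.coeff_C,
        MvPolynomial.algebraMap_eq, eq_comm (a := (0 : Fin 10 →₀ ℕ)), Finsupp.single_eq_zero]
  | add p q hp hq =>
      refine ⟨?_, ?_, ?_⟩ <;>
        simp only [map_add, Polynomial.coeff_add, MvPolynomial.coeff_add,
          hp.1, hp.2.1, hp.2.2, hq.1, hq.2.1, hq.2.2] <;> ring
  | mul_X p v hp =>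
      have key : ∀ (m : Fin 10 →₀ ℕ),
          MvPolynomial.coeff m (p * MvPolynomial.X v)
            = if v ∈ m.support then MvPolynomial.coeff (m - Finsupp.single v 1) p else 0 :=
        fun m => MvPolynomial.coeff_mul_X' m v p
      have hmul : lmap i k c (p * MvPolynomial.X v) = lmap i k c p *
          (if v = i then (Polynomial.X : Polynomial ℝ)
            else if v = k then Polynomial.C c * Polynomial.X else 0) := by
        simp [lmap]
      by_cases hvi : v = i
      · subst hvi
        have hmul2 : lmap v k c (p * MvPolynomial.X v) = lmap v k c p * Polynomial.X := by
          simp [lmap]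
        rw [hmul2]
        have m1 : (Finsupp.single v 1 : Fin 10 →₀ ℕ) - Finsupp.single v 1 = 0 := tsub_self _
        have m2 : (Finsupp.single v 2 : Fin 10 →₀ ℕ) - Finsupp.single v 1 = Finsupp.single v 1 := by
          ext a; simp [Finsupp.tsub_apply, Finsupp.single_apply]; split <;> rfl
        have m3 : (Finsupp.single v 1 + Finsupp.single k 1 : Fin 10 →₀ ℕ) - Finsupp.single v 1
            = Finsupp.single k 1 := add_tsub_cancel_left _ _
        refine ⟨?_, ?_, ?_⟩
        · rw [Polynomial.mul_coeff_zero, Polynomial.coeff_X_zero, mul_zero, key]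
          simp
        · rw [Polynomial.coeff_mul_X, hp.1, key, key]
          rw [if_pos (by simp), if_neg (by simp [hki, hik]), m1]
          ring
        · rw [show (2:ℕ) = 1 + 1 from rfl, Polynomial.coeff_mul_X, hp.2.1, key, key, key]
          rw [if_pos (by simp), if_pos (by simp), if_neg (by simp [hki, hik]), m2, m3]
          ring
      · by_cases hvk : v = k
        · subst hvk
          have hmul2 : lmap i v c (p * MvPolynomial.X v)
              = Polynomial.C c * (lmap i v c p * Polynomial.X) := by
            simp [lmap, hvi]; ring
          rw [hmul2]
          have m1 : (Finsupp.single v 1 : Fin 10 →₀ ℕ) - Finsupp.single v 1 = 0 := tsub_self _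
          have m2 : (Finsupp.single v 2 : Fin 10 →₀ ℕ) - Finsupp.single v 1 = Finsupp.single v 1 := by
            ext a; simp [Finsupp.tsub_apply, Finsupp.single_apply]; split <;> rfl
          have m3 : (Finsupp.single i 1 + Finsupp.single v 1 : Fin 10 →₀ ℕ) - Finsupp.single v 1
              = Finsupp.single i 1 := add_tsub_cancel_right _ _
          refine ⟨?_, ?_, ?_⟩
          · rw [Polynomial.coeff_C_mul, Polynomial.mul_coeff_zero, Polynomial.coeff_X_zero,
              mul_zero, mul_zero, key]
            simp
          · rw [Polynomial.coeff_C_mul, Polynomial.coeff_mul_X, hp.1, key, key]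
            rw [if_neg (by simp [Finsupp.mem_support_iff, Finsupp.single_apply, hik, hki]), if_pos (by simp), m1]
            ring
          · rw [Polynomial.coeff_C_mul, show (2:ℕ) = 1 + 1 from rfl, Polynomial.coeff_mul_X,
              hp.2.1, key, key, key]
            rw [if_neg (by simp [Finsupp.mem_support_iff, Finsupp.single_apply, hik, hki]), if_pos (by simp), if_pos (by simp), m2, m3]
            ring
        · have hmul2 : lmap i k c (p * MvPolynomial.X v) = 0 := by
            simp [lmap, hvi, hvk]
          rw [hmul2]
          have s0 : ∀ (m : Fin 10 →₀ ℕ), v ∉ m.support →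
              MvPolynomial.coeff m (p * MvPolynomial.X v) = 0 := by
            intro m hm; rw [key, if_neg hm]
          have n1 : MvPolynomial.coeff 0 (p * MvPolynomial.X v) = 0 := s0 _ (by simp)
          have n2 : MvPolynomial.coeff (Finsupp.single i 1) (p * MvPolynomial.X v) = 0 :=
            s0 _ (by simp [Finsupp.mem_support_iff, Finsupp.single_apply, Ne.symm hvi, hvi])
          have n3 : MvPolynomial.coeff (Finsupp.single k 1) (p * MvPolynomial.X v) = 0 :=
            s0 _ (by simp [Finsupp.mem_support_iff, Finsupp.single_apply, Ne.symm hvk, hvk])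
          have n4 : MvPolynomial.coeff (Finsupp.single i 2) (p * MvPolynomial.X v) = 0 :=
            s0 _ (by simp [Finsupp.mem_support_iff, Finsupp.single_apply, Ne.symm hvi, hvi])
          have n5 : MvPolynomial.coeff (Finsupp.single k 2) (p * MvPolynomial.X v) = 0 :=
            s0 _ (by simp [Finsupp.mem_support_iff, Finsupp.single_apply, Ne.symm hvk, hvk])
          have n6 : MvPolynomial.coeff (Finsupp.single i 1 + Finsupp.single k 1)
              (p * MvPolynomial.X v) = 0 :=
            s0 _ (by simp [Finsupp.mem_support_iff, Finsupp.single_apply, Ne.symm hvi, Ne.symm hvk, hvi, hvk])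
          rw [n1, n2, n3, n4, n5, n6]
          simp

private lemma rsos {n : ℕ} (f : Fin n → ℝ) (h : ∑ j, f j ^ 2 = 0) (j : Fin n) : f j = 0 := by
  have := (Finset.sum_eq_zero_iff_of_nonneg (fun i _ => sq_nonneg (f i))).mp h j
    (Finset.mem_univ j)
  exact pow_eq_zero_iff two_ne_zero |>.mp this

private lemma psos {n : ℕ} (q : Fin n → Polynomial ℝ) (hq : ∑ j, q j ^ 2 = 0) (j : Fin n) :
    q j = 0 := by
  apply Polynomial.funext
  intro r
  have h2 := congrArg (Polynomial.eval r) hq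
  rw [Polynomial.eval_finset_sum] at h2
  simp only [Polynomial.eval_pow, Polynomial.eval_zero] at h2
  have := rsos (fun j => (q j).eval r) h2 j
  simpa using this

private lemma c0sq (p : Polynomial ℝ) : (p ^ 2).coeff 0 = p.coeff 0 ^ 2 := by
  rw [sq, sq, Polynomial.mul_coeff_zero]

private lemma c2sq (p : Polynomial ℝ) :
    (p ^ 2).coeff 2 = 2 * (p.coeff 0 * p.coeff 2) + p.coeff 1 ^ 2 := by
  rw [sq, Polynomial.coeff_mul, Finset.Nat.sum_antidiagonal_eq_sum_range_succ_mk]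
  simp [Finset.sum_range_succ]
  ring

private lemma c4sq (p : Polynomial ℝ) :
    (p ^ 2).coeff 4 = 2 * (p.coeff 0 * p.coeff 4) + 2 * (p.coeff 1 * p.coeff 3)
      + p.coeff 2 ^ 2 := by
  rw [sq, Polynomial.coeff_mul, Finset.Nat.sum_antidiagonal_eq_sum_range_succ_mk]
  simp [Finset.sum_range_succ]
  ring

private lemma lmapGP_edge1 : lmap 0 9 1 GP = 0 := by
  simp [lmap, GP, sum10]
  ring
private lemma lmapGP_e09_p : lmap 0 9 (1 : ℝ) GP = 0 := by
  simp [lmap, GP, sum10]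
  ring

private lemma lmapGP_e09_m : lmap 0 9 (-1 : ℝ) GP = 0 := by
  simp [lmap, GP, sum10]
  ring

private lemma lmapGP_e49_p : lmap 4 9 (1 : ℝ) GP = 0 := by
  simp [lmap, GP, sum10]
  ring

private lemma lmapGP_e49_m : lmap 4 9 (-1 : ℝ) GP = 0 := by
  simp [lmap, GP, sum10]
  ring

private lemma lmapGP_e24_p : lmap 2 4 (1 : ℝ) GP = 0 := by
  simp [lmap, GP, sum10]
  ring

private lemma lmapGP_e24_m : lmap 2 4 (-1 : ℝ) GP = 0 := by
  simp [lmap, GP, sum10]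
  ring

private lemma lmapGP_e28_p : lmap 2 8 (1 : ℝ) GP = 0 := by
  simp [lmap, GP, sum10]
  ring

private lemma lmapGP_e28_m : lmap 2 8 (-1 : ℝ) GP = 0 := by
  simp [lmap, GP, sum10]
  ring

private lemma lmapGP_e08_p : lmap 0 8 (1 : ℝ) GP = 0 := by
  simp [lmap, GP, sum10]
  ring

private lemma lmapGP_e08_m : lmap 0 8 (-1 : ℝ) GP = 0 := by
  simp [lmap, GP, sum10]
  ring

private lemma lmapGP_rho : lmap 0 1 (0 : ℝ) GP = Polynomial.X ^ 4 := by
  simp [lmap, GP, sum10]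
  ring

private lemma sum_of_squares_lmap {N : ℕ} (h : Fin N → MvPolynomial (Fin 10) ℝ)
    (hGP : GP = ∑ j, h j ^ 2) (i k : Fin 10) (c : ℝ) :
    lmap i k c GP = ∑ j, (lmap i k c (h j)) ^ 2 := by
  rw [hGP, map_sum]
  simp [map_pow]

private lemma edge_cancel {N : ℕ} (h : Fin N → MvPolynomial (Fin 10) ℝ)
    (hGP : GP = ∑ j, h j ^ 2) (i k : Fin 10) (hik : i ≠ k)
    (h1 : lmap i k (1 : ℝ) GP = 0) (h2 : lmap i k (-1 : ℝ) GP = 0) (j : Fin N) :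
    MvPolynomial.coeff (Finsupp.single i 2) (h j)
      + MvPolynomial.coeff (Finsupp.single k 2) (h j) = 0 := by
  have q1 : lmap i k (1 : ℝ) (h j) = 0 :=
    psos _ (by rw [← sum_of_squares_lmap h hGP, h1]) j
  have q2 : lmap i k (-1 : ℝ) (h j) = 0 :=
    psos _ (by rw [← sum_of_squares_lmap h hGP, h2]) j
  have e1 := (line_coeff i k hik 1 (h j)).2.2
  have e2 := (line_coeff i k hik (-1) (h j)).2.2
  rw [q1] at e1
  rw [q2] at e2
  simp only [Polynomial.coeff_zero] at e1 e2
  nlinarith [e1, e2]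

private lemma part2 :
    ¬ ∃ (N : ℕ) (h : Fin N → MvPolynomial (Fin 10) ℝ), GP = ∑ j, (h j) ^ 2 := by
  rintro ⟨N, h, hGP⟩
  -- the restriction to the x₀-axis
  have hps : Polynomial.X ^ 4 = ∑ j, (lmap 0 1 (0:ℝ) (h j)) ^ 2 := by
    rw [← lmapGP_rho]; exact sum_of_squares_lmap h hGP 0 1 0
  set p : Fin N → Polynomial ℝ := fun j => lmap 0 1 (0:ℝ) (h j) with hp
  -- constant coefficients vanish
  have hc0 : ∀ j, (p j).coeff 0 = 0 := by
    intro j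
    have := congrArg (fun q => Polynomial.coeff q 0) hps
    simp only [Polynomial.finset_sum_coeff, c0sq, Polynomial.coeff_X_pow] at this
    exact rsos _ (by simpa using this.symm) j
  -- linear coefficients vanish
  have hc1 : ∀ j, (p j).coeff 1 = 0 := by
    intro j
    have := congrArg (fun q => Polynomial.coeff q 2) hps
    simp only [Polynomial.finset_sum_coeff, c2sq, Polynomial.coeff_X_pow] at this
    simp only [show ∀ j, (lmap 0 1 (0:ℝ) (h j)).coeff 0 = 0 from hc0, mul_zero, zero_mul, zero_add, mul_zero] at this
    exact rsos _ (by simpa using this.symm) j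
  -- sum of squares of the x₀² coefficients is 1
  have hmain : ∑ j, ((p j).coeff 2) ^ 2 = 1 := by
    have := congrArg (fun q => Polynomial.coeff q 4) hps
    simp only [Polynomial.finset_sum_coeff, c4sq, Polynomial.coeff_X_pow] at this
    simp only [show ∀ j, (lmap 0 1 (0:ℝ) (h j)).coeff 0 = 0 from hc0, show ∀ j, (lmap 0 1 (0:ℝ) (h j)).coeff 1 = 0 from hc1, mul_zero, zero_mul, zero_add, add_zero] at this
    simpa using this.symm
  -- identify the coefficient with the multivariate one
  have hid : ∀ j, (p j).coeff 2 = MvPolynomial.coeff (Finsupp.single (0 : Fin 10) 2) (h j) := by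
    intro j
    have := (line_coeff 0 1 (by decide) 0 (h j)).2.2
    simpa using this
  -- the five edge relations around an odd cycle in the Petersen graph
  have E09 := edge_cancel h hGP 0 9 (by decide) lmapGP_e09_p lmapGP_e09_m
  have E49 := edge_cancel h hGP 4 9 (by decide) lmapGP_e49_p lmapGP_e49_m
  have E24 := edge_cancel h hGP 2 4 (by decide) lmapGP_e24_p lmapGP_e24_m
  have E28 := edge_cancel h hGP 2 8 (by decide) lmapGP_e28_p lmapGP_e28_m
  have E08 := edge_cancel h hGP 0 8 (by decide) lmapGP_e08_p lmapGP_e08_m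
  have hzero : ∀ j, MvPolynomial.coeff (Finsupp.single (0 : Fin 10) 2) (h j) = 0 := by
    intro j
    have := E09 j; have := E49 j; have := E24 j; have := E28 j; have := E08 j
    linarith [E09 j, E49 j, E24 j, E28 j, E08 j]
  rw [Finset.sum_eq_zero (fun j _ => by rw [hid j, hzero j]; norm_num)] at hmain
  norm_num at hmain

private lemma evalGP (x : Fin 10 → ℝ) : eval x GP =
    (x 0^2+x 1^2+x 2^2+x 3^2+x 4^2+x 5^2+x 6^2+x 7^2+x 8^2+x 9^2)^2
    - 4*((x 4*x 9 - x 5*x 8 + x 6*x 7)^2 + (-(x 1*x 9) + x 2*x 8 - x 3*x 7)^2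
      + (x 0*x 9 - x 2*x 6 + x 3*x 5)^2 + (-(x 0*x 8) + x 1*x 6 - x 3*x 4)^2
      + (x 0*x 7 - x 1*x 5 + x 2*x 4)^2) := by
  simp only [GP, sum10, map_sub, map_mul, map_add, map_pow, map_neg, map_ofNat, eval_X]

private lemma keyid (x : Fin 10 → ℝ) :
    (x 0^2+x 1^2+x 2^2+x 3^2+x 4^2+x 5^2+x 6^2+x 7^2+x 8^2+x 9^2) * ((x 0^2+x 1^2+x 2^2+x 3^2+x 4^2+x 5^2+x 6^2+x 7^2+x 8^2+x 9^2)^2 - 4*((x 4*x 9 - x 5*x 8 + x 6*x 7)^2 + (-(x 1*x 9) + x 2*x 8 - x 3*x 7)^2 + (x 0*x 9 - x 2*x 6 + x 3*x 5)^2 + (-(x 0*x 8) + x 1*x 6 - x 3*x 4)^2 + (x 0*x 7 - x 1*x 5 + x 2*x 4)^2)) =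
      (-x 0^3 - x 0*x 1^2 - x 0*x 2^2 - x 0*x 3^2 - x 0*x 4^2 - x 0*x 5^2 - x 0*x 6^2 + x 0*x 7^2 + x 0*x 8^2 + x 0*x 9^2 - 2*x 1*x 5*x 7 - 2*x 1*x 6*x 8 + 2*x 2*x 4*x 7 - 2*x 2*x 6*x 9 + 2*x 3*x 4*x 8 + 2*x 3*x 5*x 9)^2
    + (-x 0^2*x 1 - 2*x 0*x 5*x 7 - 2*x 0*x 6*x 8 - x 1^3 - x 1*x 2^2 - x 1*x 3^2 - x 1*x 4^2 + x 1*x 5^2 + x 1*x 6^2 - x 1*x 7^2 - x 1*x 8^2 + x 1*x 9^2 - 2*x 2*x 4*x 5 - 2*x 2*x 8*x 9 - 2*x 3*x 4*x 6 + 2*x 3*x 7*x 9)^2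
    + (-x 0^2*x 2 + 2*x 0*x 4*x 7 - 2*x 0*x 6*x 9 - x 1^2*x 2 - 2*x 1*x 4*x 5 - 2*x 1*x 8*x 9 - x 2^3 - x 2*x 3^2 + x 2*x 4^2 - x 2*x 5^2 + x 2*x 6^2 - x 2*x 7^2 + x 2*x 8^2 - x 2*x 9^2 - 2*x 3*x 5*x 6 - 2*x 3*x 7*x 8)^2
    + (-x 0^2*x 3 + 2*x 0*x 4*x 8 + 2*x 0*x 5*x 9 - x 1^2*x 3 - 2*x 1*x 4*x 6 + 2*x 1*x 7*x 9 - x 2^2*x 3 - 2*x 2*x 5*x 6 - 2*x 2*x 7*x 8 - x 3^3 + x 3*x 4^2 + x 3*x 5^2 - x 3*x 6^2 + x 3*x 7^2 - x 3*x 8^2 - x 3*x 9^2)^2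
    + (-x 0^2*x 4 + 2*x 0*x 2*x 7 + 2*x 0*x 3*x 8 - x 1^2*x 4 - 2*x 1*x 2*x 5 - 2*x 1*x 3*x 6 + x 2^2*x 4 + x 3^2*x 4 - x 4^3 - x 4*x 5^2 - x 4*x 6^2 - x 4*x 7^2 - x 4*x 8^2 + x 4*x 9^2 - 2*x 5*x 8*x 9 + 2*x 6*x 7*x 9)^2
    + (-x 0^2*x 5 - 2*x 0*x 1*x 7 + 2*x 0*x 3*x 9 + x 1^2*x 5 - 2*x 1*x 2*x 4 - x 2^2*x 5 - 2*x 2*x 3*x 6 + x 3^2*x 5 - x 4^2*x 5 - 2*x 4*x 8*x 9 - x 5^3 - x 5*x 6^2 - x 5*x 7^2 + x 5*x 8^2 - x 5*x 9^2 - 2*x 6*x 7*x 8)^2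
    + (-x 0^2*x 6 - 2*x 0*x 1*x 8 - 2*x 0*x 2*x 9 + x 1^2*x 6 - 2*x 1*x 3*x 4 + x 2^2*x 6 - 2*x 2*x 3*x 5 - x 3^2*x 6 - x 4^2*x 6 + 2*x 4*x 7*x 9 - x 5^2*x 6 - 2*x 5*x 7*x 8 - x 6^3 + x 6*x 7^2 - x 6*x 8^2 - x 6*x 9^2)^2
    + (x 0^2*x 7 - 2*x 0*x 1*x 5 + 2*x 0*x 2*x 4 - x 1^2*x 7 + 2*x 1*x 3*x 9 - x 2^2*x 7 - 2*x 2*x 3*x 8 + x 3^2*x 7 - x 4^2*x 7 + 2*x 4*x 6*x 9 - x 5^2*x 7 - 2*x 5*x 6*x 8 + x 6^2*x 7 - x 7^3 - x 7*x 8^2 - x 7*x 9^2)^2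
    + (x 0^2*x 8 - 2*x 0*x 1*x 6 + 2*x 0*x 3*x 4 - x 1^2*x 8 - 2*x 1*x 2*x 9 + x 2^2*x 8 - 2*x 2*x 3*x 7 - x 3^2*x 8 - x 4^2*x 8 - 2*x 4*x 5*x 9 + x 5^2*x 8 - 2*x 5*x 6*x 7 - x 6^2*x 8 - x 7^2*x 8 - x 8^3 - x 8*x 9^2)^2
    + (x 0^2*x 9 - 2*x 0*x 2*x 6 + 2*x 0*x 3*x 5 + x 1^2*x 9 - 2*x 1*x 2*x 8 + 2*x 1*x 3*x 7 - x 2^2*x 9 - x 3^2*x 9 + x 4^2*x 9 - 2*x 4*x 5*x 8 + 2*x 4*x 6*x 7 - x 5^2*x 9 - x 6^2*x 9 - x 7^2*x 9 - x 8^2*x 9 - x 9^3)^2 := by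
  ring

private lemma part1 (x : Fin 10 → ℝ) : 0 ≤ eval x GP := by
  rw [evalGP]
  have hs : (0:ℝ) ≤ x 0^2+x 1^2+x 2^2+x 3^2+x 4^2+x 5^2+x 6^2+x 7^2+x 8^2+x 9^2 := by positivity
  rcases hs.eq_or_lt with h | h
  · 
    have e0 : x 0 ^ 2 = 0 := by linarith [sq_nonneg (x 0), sq_nonneg (x 1), sq_nonneg (x 2), sq_nonneg (x 3), sq_nonneg (x 4), sq_nonneg (x 5), sq_nonneg (x 6), sq_nonneg (x 7), sq_nonneg (x 8), sq_nonneg (x 9)]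
    have h0 : x 0 = 0 := pow_eq_zero_iff two_ne_zero |>.mp e0
    have e1 : x 1 ^ 2 = 0 := by linarith [sq_nonneg (x 0), sq_nonneg (x 1), sq_nonneg (x 2), sq_nonneg (x 3), sq_nonneg (x 4), sq_nonneg (x 5), sq_nonneg (x 6), sq_nonneg (x 7), sq_nonneg (x 8), sq_nonneg (x 9)]
    have h1 : x 1 = 0 := pow_eq_zero_iff two_ne_zero |>.mp e1
    have e2 : x 2 ^ 2 = 0 := by linarith [sq_nonneg (x 0), sq_nonneg (x 1), sq_nonneg (x 2), sq_nonneg (x 3), sq_nonneg (x 4), sq_nonneg (x 5), sq_nonneg (x 6), sq_nonneg (x 7), sq_nonneg (x 8), sq_nonneg (x 9)]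
    have h2 : x 2 = 0 := pow_eq_zero_iff two_ne_zero |>.mp e2
    have e3 : x 3 ^ 2 = 0 := by linarith [sq_nonneg (x 0), sq_nonneg (x 1), sq_nonneg (x 2), sq_nonneg (x 3), sq_nonneg (x 4), sq_nonneg (x 5), sq_nonneg (x 6), sq_nonneg (x 7), sq_nonneg (x 8), sq_nonneg (x 9)]
    have h3 : x 3 = 0 := pow_eq_zero_iff two_ne_zero |>.mp e3
    have e4 : x 4 ^ 2 = 0 := by linarith [sq_nonneg (x 0), sq_nonneg (x 1), sq_nonneg (x 2), sq_nonneg (x 3), sq_nonneg (x 4), sq_nonneg (x 5), sq_nonneg (x 6), sq_nonneg (x 7), sq_nonneg (x 8), sq_nonneg (x 9)]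
    have h4 : x 4 = 0 := pow_eq_zero_iff two_ne_zero |>.mp e4
    have e5 : x 5 ^ 2 = 0 := by linarith [sq_nonneg (x 0), sq_nonneg (x 1), sq_nonneg (x 2), sq_nonneg (x 3), sq_nonneg (x 4), sq_nonneg (x 5), sq_nonneg (x 6), sq_nonneg (x 7), sq_nonneg (x 8), sq_nonneg (x 9)]
    have h5 : x 5 = 0 := pow_eq_zero_iff two_ne_zero |>.mp e5
    have e6 : x 6 ^ 2 = 0 := by linarith [sq_nonneg (x 0), sq_nonneg (x 1), sq_nonneg (x 2), sq_nonneg (x 3), sq_nonneg (x 4), sq_nonneg (x 5), sq_nonneg (x 6), sq_nonneg (x 7), sq_nonneg (x 8), sq_nonneg (x 9)]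
    have h6 : x 6 = 0 := pow_eq_zero_iff two_ne_zero |>.mp e6
    have e7 : x 7 ^ 2 = 0 := by linarith [sq_nonneg (x 0), sq_nonneg (x 1), sq_nonneg (x 2), sq_nonneg (x 3), sq_nonneg (x 4), sq_nonneg (x 5), sq_nonneg (x 6), sq_nonneg (x 7), sq_nonneg (x 8), sq_nonneg (x 9)]
    have h7 : x 7 = 0 := pow_eq_zero_iff two_ne_zero |>.mp e7
    have e8 : x 8 ^ 2 = 0 := by linarith [sq_nonneg (x 0), sq_nonneg (x 1), sq_nonneg (x 2), sq_nonneg (x 3), sq_nonneg (x 4), sq_nonneg (x 5), sq_nonneg (x 6), sq_nonneg (x 7), sq_nonneg (x 8), sq_nonneg (x 9)]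
    have h8 : x 8 = 0 := pow_eq_zero_iff two_ne_zero |>.mp e8
    have e9 : x 9 ^ 2 = 0 := by linarith [sq_nonneg (x 0), sq_nonneg (x 1), sq_nonneg (x 2), sq_nonneg (x 3), sq_nonneg (x 4), sq_nonneg (x 5), sq_nonneg (x 6), sq_nonneg (x 7), sq_nonneg (x 8), sq_nonneg (x 9)]
    have h9 : x 9 = 0 := pow_eq_zero_iff two_ne_zero |>.mp e9
    rw [h0, h1, h2, h3, h4, h5, h6, h7, h8, h9]; norm_num
  · have hkey : (x 0^2+x 1^2+x 2^2+x 3^2+x 4^2+x 5^2+x 6^2+x 7^2+x 8^2+x 9^2) * ((x 0^2+x 1^2+x 2^2+x 3^2+x 4^2+x 5^2+x 6^2+x 7^2+x 8^2+x 9^2)^2 - 4*((x 4*x 9 - x 5*x 8 + x 6*x 7)^2 + (-(x 1*x 9) + x 2*x 8 - x 3*x 7)^2 + (x 0*x 9 - x 2*x 6 + x 3*x 5)^2 + (-(x 0*x 8) + x 1*x 6 - x 3*x 4)^2 + (x 0*x 7 - x 1*x 5 + x 2*x 4)^2)) ≥ (x 0^2+x 1^2+x 2^2+x 3^2+x 4^2+x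 5^2+x 6^2+x 7^2+x 8^2+x 9^2) * 0 := by
      rw [mul_zero, keyid x]
      positivity
    exact le_of_mul_le_mul_left (by linarith [hkey]) h

/-- `G` is nonnegative on `ℝ¹⁰` but is not a sum of squares of real polynomials. -/
theorem stmt8 :
    (∀ x : Fin 10 → ℝ, 0 ≤ eval x GP)
    ∧ ¬ ∃ (N : ℕ) (h : Fin N → MvPolynomial (Fin 10) ℝ), GP = ∑ j, (h j) ^ 2 :=
  ⟨part1, part2⟩
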